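/- arXiv:2604.05720 — 5 statements merged into one kernel-verified Lean document; each statement's English description precedes it below -/
import Mathlib

section
/- For the independent replication system du_i/dt = u_i(k_i - f(u)) on the simplex S_n with f(u) = Σ k_j u_j and distinct positive constants k_i, if m is the index with k_m = max_i k_i and the initial condition has all positive components, then u_m(t) → 1 and u_i(t) → 0 for all i ≠ m as t → ∞. -/
open Filter Finset

/-- Independent replication: the fittest species takes over. -/
theorem independent_replication_selection
    (n : ℕ) (hn : 0 < n) (k : Fin n → ℝ) (hk : ∀ i, 0 < k i)
    (hdist : Function.Injective k)
    (m : Fin n) (hm : ∀ i, i ≠ m → k i < k m)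
    (u : ℝ → Fin n → ℝ)
    (hsimplex : ∀ t, (∀ i, 0 ≤ u t i) ∧ ∑ i, u t i = 1)
    (hpos : ∀ i, 0 < u 0 i)
    (hode : ∀ t i, HasDerivAt (fun s => u s i)
      (u t i * (k i - ∑ j, k j * u t j)) t) :
    Tendsto (fun t => u t m) atTop (nhds 1) ∧
    ∀ i, i ≠ m → Tendsto (fun t => u t i) atTop (nhds 0) := by
  classical
  set f : ℝ → ℝ := fun t => ∑ j, k j * u t j with hf
  -- bound on f
  have hfb : ∀ t, ‖f t‖ ≤ k m := by
    intro t
    obtain ⟨hnn, hsum⟩ := hsimplex t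
    have h0 : 0 ≤ f t := Finset.sum_nonneg fun j _ => mul_nonneg (hk j).le (hnn j)
    rw [Real.norm_eq_abs, abs_of_nonneg h0]
    calc f t ≤ ∑ j, k m * u t j := by
          refine Finset.sum_le_sum fun j _ => mul_le_mul_of_nonneg_right ?_ (hnn j)
          rcases eq_or_ne j m with h | h
          · exact le_of_eq (by rw [h])
          · exact (hm j h).le
      _ = k m := by rw [← Finset.mul_sum, hsum, mul_one]
  -- p i t := u t i * exp (-(k i) * t) satisfies p' = -f * p
  set p : Fin n → ℝ → ℝ := fun i t => u t i * Real.exp (-(k i) * t) with hp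
  have hpderiv : ∀ i t, HasDerivAt (p i) (-(f t) * p i t) t := by
    intro i t
    have hexp : HasDerivAt (fun s : ℝ => Real.exp (-(k i) * s))
        (Real.exp (-(k i) * t) * (-(k i) * 1)) t :=
      ((hasDerivAt_id t).const_mul (-(k i))).exp
    have := (hode t i).mul hexp
    convert this using 1
    · rfl
    · rfl
    · rfl
    simp only [hp, hf]
    ring
  -- key: for t ≥ 0, p i t * u 0 j = p j t * u 0 i
  have hkey : ∀ t, 0 ≤ t → ∀ i j, p i t * u 0 j = p j t * u 0 i := by
    intro T hT i j
    set q : ℝ → ℝ := fun t => p i t * u 0 j - p j t * u 0 i with hq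
    have hqderiv : ∀ t, HasDerivAt q (-(f t) * q t) t := by
      intro t
      have := ((hpderiv i t).mul_const (u 0 j)).sub ((hpderiv j t).mul_const (u 0 i))
      convert this using 1
      · rfl
      · rfl
      · rfl
      simp only [hq]; ring
    have h0 : q 0 = 0 := by
      simp only [hq, hp, mul_zero, neg_zero, Real.exp_zero, mul_one]
      ring
    have := norm_le_gronwallBound_of_norm_deriv_right_le (f := q)
      (f' := fun t => -(f t) * q t) (a := 0) (b := T) (δ := 0) (K := k m) (ε := 0)
      (fun t _ => (hqderiv t).continuousAt.continuousWithinAt)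
      (fun t _ => (hqderiv t).hasDerivWithinAt)
      (by simp [h0])
      (fun t _ => by
        rw [norm_mul, norm_neg, add_zero]
        exact mul_le_mul_of_nonneg_right (hfb t) (norm_nonneg _))
      T ⟨hT, le_refl T⟩
    rw [gronwallBound_ε0_δ0] at this
    have : q T = 0 := by
      have := le_antisymm this (norm_nonneg _)
      exact norm_eq_zero.mp this
    simpa [hq, sub_eq_zero] using this
  -- explicit formula via v and S
  set v : Fin n → ℝ → ℝ := fun i t => u 0 i * Real.exp ((k i - k m) * t) with hv
  set S : ℝ → ℝ := fun t => ∑ j, v j t with hS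
  have hswap : ∀ t, 0 ≤ t → ∀ i j, u t i * v j t = u t j * v i t := by
    intro t ht i j
    have key := hkey t ht i j
    simp only [hp] at key
    have e1 : Real.exp ((k j - k m) * t)
        = Real.exp (-(k i) * t) * Real.exp ((k i + k j - k m) * t) := by
      rw [← Real.exp_add]; ring_nf
    have e2 : Real.exp ((k i - k m) * t)
        = Real.exp (-(k j) * t) * Real.exp ((k i + k j - k m) * t) := by
      rw [← Real.exp_add]; ring_nf
    simp only [hv]
    rw [e1, e2]
    linear_combination Real.exp ((k i + k j - k m) * t) * key
  have hformula : ∀ t, 0 ≤ t → ∀ i, u t i * S t = v i t := by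
    intro t ht i
    obtain ⟨_, hsum⟩ := hsimplex t
    calc u t i * S t = ∑ j, u t i * v j t := by rw [hS, Finset.mul_sum]
      _ = ∑ j, u t j * v i t := Finset.sum_congr rfl fun j _ => hswap t ht i j
      _ = (∑ j, u t j) * v i t := by rw [Finset.sum_mul]
      _ = v i t := by rw [hsum, one_mul]
  -- limits of v
  have hvm : ∀ t, v m t = u 0 m := by intro t; simp [hv]
  have hvlim : ∀ i, i ≠ m → Tendsto (v i) atTop (nhds 0) := by
    intro i hi
    have hc : k i - k m < 0 := sub_neg.mpr (hm i hi)
    have h1 : Tendsto (fun t : ℝ => (k i - k m) * t) atTop atBot :=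
      (tendsto_const_mul_atBot_of_neg hc).mpr tendsto_id
    have h2 : Tendsto (fun t => Real.exp ((k i - k m) * t)) atTop (nhds 0) :=
      Real.tendsto_exp_atBot.comp h1
    simpa [hv] using h2.const_mul (u 0 i)
  have hSlim : Tendsto S atTop (nhds (u 0 m)) := by
    have : Tendsto S atTop (nhds (∑ j, if j = m then u 0 m else 0)) := by
      apply tendsto_finset_sum
      intro j _
      rcases eq_or_ne j m with h | h
      · rw [h, if_pos rfl]
        have hvmf : v m = fun _ => u 0 m := funext hvm
        rw [hvmf]; exact tendsto_const_nhds
      · simp only [if_neg h]; exact hvlim j h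
    simpa using this
  have hSpos : ∀ t, 0 < S t := by
    intro t
    have : u 0 m ≤ S t := by
      rw [← hvm t]
      simpa using Finset.single_le_sum (f := fun j => v j t)
        (fun j _ => mul_nonneg (hpos j).le (Real.exp_pos _).le) (Finset.mem_univ m)
    linarith [hpos m]
  have heq : ∀ i, (fun t => u t i) =ᶠ[atTop] (fun t => v i t / S t) := by
    intro i
    filter_upwards [eventually_ge_atTop (0 : ℝ)] with t ht
    have := hformula t ht i
    field_simp [(hSpos t).ne']
    linarith [this]
  constructor
  · refine Tendsto.congr' (heq m).symm ?_
    have : Tendsto (fun t => v m t / S t) atTop (nhds (u 0 m / u 0 m)) := by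
      refine Tendsto.div ?_ hSlim (hpos m).ne'
      have hvmf : v m = fun _ => u 0 m := funext hvm
      exact hvmf ▸ tendsto_const_nhds
    rwa [div_self (hpos m).ne'] at this
  · intro i hi
    refine Tendsto.congr' (heq i).symm ?_
    have : Tendsto (fun t => v i t / S t) atTop (nhds (0 / u 0 m)) :=
      Tendsto.div (hvlim i hi) hSlim (hpos m).ne'
    rwa [zero_div] at this
end

section
/- For any probability vector u ∈ S_n (u_i ≥ 0, Σ u_i = 1) and nonnegative reals k_i, the inequality Σ k_i² u_i³ ≥ (Σ k_i u_i²)² holds; consequently the mean fitness f₂(u) = Σ k_i u_i² is non-decreasing along solutions of the autocatalytic replicator system du_i/dt = u_i(k_i u_i − f₂(u)). -/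
open Filter Finset

lemma cs_aux (n : ℕ) (k : Fin n → ℝ) (hk : ∀ i, 0 ≤ k i)
    (u : Fin n → ℝ) (hu : ∀ i, 0 ≤ u i) (hs : ∑ i, u i = 1) :
    (∑ i, k i * (u i)^2)^2 ≤ ∑ i, (k i)^2 * (u i)^3 := by
  have h := sum_mul_sq_le_sq_mul_sq Finset.univ
    (fun i => Real.sqrt ((k i)^2 * (u i)^3)) (fun i => Real.sqrt (u i))
  have h1 : ∀ i : Fin n, Real.sqrt ((k i)^2 * (u i)^3) * Real.sqrt (u i)
      = k i * (u i)^2 := by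
    intro i
    rw [← Real.sqrt_mul (mul_nonneg (sq_nonneg _) (pow_nonneg (hu i) 3))]
    have : (k i)^2 * (u i)^3 * u i = (k i * (u i)^2)^2 := by ring
    rw [this, Real.sqrt_sq (mul_nonneg (hk i) (sq_nonneg _))]
  have h2 : ∀ i : Fin n, Real.sqrt ((k i)^2 * (u i)^3) ^ 2 = (k i)^2 * (u i)^3 :=
    fun i => Real.sq_sqrt (mul_nonneg (sq_nonneg _) (pow_nonneg (hu i) 3))
  have h3 : ∀ i : Fin n, Real.sqrt (u i) ^ 2 = u i :=
    fun i => Real.sq_sqrt (hu i)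
  simp only [h1, h2, h3, hs, mul_one] at h
  exact h

/-- Σ k_i² u_i³ ≥ (Σ k_i u_i²)² on the simplex, and consequently the mean
    fitness f₂(u) = Σ k_i u_i² is non-decreasing along solutions of the
    autocatalytic replicator system. -/
theorem autocatalytic_mean_fitness_nondecreasing
    (n : ℕ) (k : Fin n → ℝ) (hk : ∀ i, 0 ≤ k i) :
    (∀ u : Fin n → ℝ, (∀ i, 0 ≤ u i) → ∑ i, u i = 1 →
      (∑ i, k i * (u i)^2)^2 ≤ ∑ i, (k i)^2 * (u i)^3) ∧
    (∀ u : ℝ → Fin n → ℝ,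
      (∀ t, (∀ i, 0 ≤ u t i) ∧ ∑ i, u t i = 1) →
      (∀ t i, HasDerivAt (fun s => u s i)
        (u t i * (k i * u t i - ∑ j, k j * (u t j)^2)) t) →
      Monotone (fun t => ∑ i, k i * (u t i)^2)) := by
  constructor
  · exact fun u hu hs => cs_aux n k hk u hu hs
  · intro u hsimp hderiv
    set F : ℝ → ℝ := fun t => ∑ i, k i * (u t i)^2 with hF
    have hD : ∀ t, HasDerivAt F
        (2 * (∑ i, (k i)^2 * (u t i)^3 - (∑ i, k i * (u t i)^2)^2)) t := by
      intro t
      have h0 : HasDerivAt F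
          (∑ i, k i * (2 * u t i * (u t i * (k i * u t i - ∑ j, k j * (u t j)^2)))) t := by
        apply HasDerivAt.fun_sum
        intro i _
        exact (((hderiv t i).pow 2).const_mul (k i)).congr_deriv (by ring)
      convert h0 using 1
      have he : ∀ i : Fin n,
          k i * (2 * u t i * (u t i * (k i * u t i - ∑ j, k j * (u t j)^2)))
          = 2 * ((k i)^2 * (u t i)^3)
            - (2 * ∑ j, k j * (u t j)^2) * (k i * (u t i)^2) := by
        intro i; ring
      rw [Finset.sum_congr rfl (fun i _ => he i), Finset.sum_sub_distrib,
        ← Finset.mul_sum, ← Finset.mul_sum]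
      ring
    apply monotone_of_deriv_nonneg
    · exact fun t => (hD t).differentiableAt
    · intro t
      rw [(hD t).deriv]
      have := cs_aux n k hk (u t) (hsimp t).1 (hsimp t).2
      linarith
end

section
/- Let Q_N be the (N+1)×(N+1) tridiagonal matrix with entries (Q_N)_{j+1,j} = N−j, (Q_N)_{j−1,j} = j, (Q_N)_{jj} = −N (indices 0..N). Then the eigenvalues of Q_N are exactly 0, −2, −4, ..., −2N. -/
open Finset Matrix


noncomputable def fall (d : ℕ) (x : ℝ) : ℝ := ∏ i ∈ Finset.range d, (x - i)

lemma fall_zero (x : ℝ) : fall 0 x = 1 := by simp [fall]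

lemma fall_succ (d : ℕ) (x : ℝ) : fall (d+1) x = fall d x * (x - d) :=
  Finset.prod_range_succ _ _

lemma fall_succ' (d : ℕ) (x : ℝ) : fall (d+1) x = x * fall d (x-1) := by
  rw [fall, Finset.prod_range_succ', fall]
  rw [Finset.prod_congr rfl (fun i (_ : i ∈ Finset.range d) => show x - ((i:ℕ)+1 : ℕ) = (x-1) - i by push_cast; ring)]
  push_cast
  ring

lemma fall_nat_zero_of_lt {d k : ℕ} (h : k < d) : fall d (k : ℝ) = 0 := by
  rw [fall]
  exact Finset.prod_eq_zero (Finset.mem_range.mpr h) (by simp)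

lemma fall_self_pos (d : ℕ) : 0 < fall d (d : ℝ) := by
  rw [fall]
  exact Finset.prod_pos fun i hi => by
    rw [Finset.mem_range] at hi
    have : (i:ℝ) < d := by exact_mod_cast hi
    linarith

lemma key (N e : ℕ) (x : ℝ) :
    ((N:ℝ) - x) * fall (e+1) (x+1) + x * fall (e+1) (x-1) - N * fall (e+1) x
    = -2*((e:ℝ)+1) * fall (e+1) x + ((e:ℝ)+1)*((N:ℝ)-((e:ℝ)+1)+1) * fall e x := by
  have h1 : fall (e+1) (x+1) = (x+1) * fall e x := by
    rw [fall_succ']; ring_nf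
  have h2 : fall (e+1) (x-1) = fall e (x-1) * ((x-1) - e) := fall_succ e (x-1)
  have h3 : fall (e+1) x = x * fall e (x-1) := fall_succ' e x
  have h4 : fall (e+1) x = fall e x * (x - e) := fall_succ e x
  have h5 : x * fall e (x-1) = fall e x * (x - e) := h3 ▸ h4
  rw [h1, h2, h4]
  linear_combination (x - 1 - (e:ℝ)) * h5

lemma sum3 (N k : ℕ) (hk : k ≤ N) (F : ℕ → ℝ) :
    ∑ j ∈ Finset.range (N+1),
      (if j = k+1 then ((N:ℝ) - k) else if k = j+1 then (k:ℝ)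
        else if j = k then -(N:ℝ) else 0) * F j
    = ((N:ℝ) - k) * F (k+1) + (k:ℝ) * F (k-1) - (N:ℝ) * F k := by
  have hsplit : ∀ j, (if j = k+1 then ((N:ℝ) - k) else if k = j+1 then (k:ℝ)
        else if j = k then -(N:ℝ) else 0) * F j
      = (if j = k+1 then ((N:ℝ) - k) * F j else 0)
        + ((if j = k-1 ∧ 1 ≤ k then (k:ℝ) * F j else 0)
        + (if j = k then -((N:ℝ) * F j) else 0)) := by
    intro j
    split_ifs <;> first | ring1 | omega | (exfalso; omega)
  rw [Finset.sum_congr rfl fun j _ => hsplit j, Finset.sum_add_distrib,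
    Finset.sum_add_distrib]
  have e1 : (∑ j ∈ Finset.range (N+1), if j = k+1 then ((N:ℝ) - k) * F j else 0)
      = ((N:ℝ) - k) * F (k+1) := by
    rw [Finset.sum_ite_eq' (Finset.range (N+1)) (k+1) (fun j => ((N:ℝ) - k) * F j)]
    split_ifs with h
    · rfl
    · have : k = N := by simp [Finset.mem_range] at h; omega
      simp [this]
  have e2 : (∑ j ∈ Finset.range (N+1), if j = k-1 ∧ 1 ≤ k then (k:ℝ) * F j else 0)
      = (k:ℝ) * F (k-1) := by
    rcases Nat.eq_zero_or_pos k with h | h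
    · simp [h]
    · have : ∀ j, (if j = k-1 ∧ 1 ≤ k then (k:ℝ) * F j else 0)
          = (if j = k-1 then (k:ℝ) * F j else 0) := by
        intro j; by_cases hj : j = k-1 <;> simp [hj]; omega
      rw [Finset.sum_congr rfl fun j _ => this j,
        Finset.sum_ite_eq' (Finset.range (N+1)) (k-1) (fun j => (k:ℝ) * F j),
        if_pos (Finset.mem_range.mpr (by omega))]
  have e3 : (∑ j ∈ Finset.range (N+1), if j = k then -((N:ℝ) * F j) else 0)
      = -((N:ℝ) * F k) := by
    rw [Finset.sum_ite_eq' (Finset.range (N+1)) k (fun j => -((N:ℝ) * F j)),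
      if_pos (Finset.mem_range.mpr (by omega))]
  rw [e1, e2, e3]; ring

lemma sum2 (n d : ℕ) (hd : d ≤ n) (G : ℕ → ℝ) (a b : ℝ) (hb : d = 0 → b = 0) :
    ∑ e ∈ Finset.range (n+1),
      G e * (if e = d then a else if e+1 = d then b else 0)
    = G d * a + G (d-1) * b := by
  have hsplit : ∀ e, G e * (if e = d then a else if e+1 = d then b else 0)
      = (if e = d then G e * a else 0) + (if e = d-1 ∧ 1 ≤ d then G e * b else 0) := by
    intro e
    split_ifs <;> first | ring1 | omega | (exfalso; omega)
  rw [Finset.sum_congr rfl fun e _ => hsplit e, Finset.sum_add_distrib,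
    Finset.sum_ite_eq' (Finset.range (n+1)) d (fun e => G e * a),
    if_pos (Finset.mem_range.mpr (by omega))]
  rcases Nat.eq_zero_or_pos d with h | h
  · simp [h, hb h]
  · have : ∀ e, (if e = d-1 ∧ 1 ≤ d then G e * b else 0)
        = (if e = d-1 then G e * b else 0) := by
      intro e; by_cases he : e = d-1 <;> simp [he]; omega
    rw [Finset.sum_congr rfl fun e _ => this e,
      Finset.sum_ite_eq' (Finset.range (n+1)) (d-1) (fun e => G e * b),
      if_pos (Finset.mem_range.mpr (by omega))]

noncomputable def Pm (N : ℕ) : Matrix (Fin (N+1)) (Fin (N+1)) ℝ :=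
  fun k d => fall (d:ℕ) ((k:ℕ):ℝ)

def Tm (N : ℕ) : Matrix (Fin (N+1)) (Fin (N+1)) ℝ :=
  fun e d => if (e:ℕ) = (d:ℕ) then -2*((d:ℕ):ℝ)
    else if (e:ℕ)+1 = (d:ℕ) then ((d:ℕ):ℝ)*((N:ℝ) - ((d:ℕ):ℝ) + 1) else 0

/-- The eigenvalues of the class-lumped Crow–Kimura mutation matrix Q_N
    (subdiagonal N−j, superdiagonal j, diagonal −N) are exactly
    0, −2, −4, …, −2N. -/
theorem crow_kimura_mutation_matrix_eigenvalues
    (N : ℕ) (Q : Matrix (Fin (N + 1)) (Fin (N + 1)) ℝ)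
    (hQ : ∀ i j : Fin (N + 1), Q i j =
      if (i : ℕ) = (j : ℕ) + 1 then (N : ℝ) - (j : ℕ)
      else if (j : ℕ) = (i : ℕ) + 1 then (j : ℝ)
      else if i = j then -(N : ℝ) else 0) :
    ∀ μ : ℝ, (∃ v : Fin (N + 1) → ℝ, v ≠ 0 ∧ Q.mulVec v = μ • v) ↔
      ∃ k : Fin (N + 1), μ = -2 * (k : ℕ) := by
  intro μ
  classical
  have hPT : Qᵀ * Pm N = Pm N * Tm N := by
    ext k d
    rw [Matrix.mul_apply, Matrix.mul_apply]
    have hL : ∑ j, Qᵀ k j * Pm N j d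
        = ((N:ℝ) - (k:ℕ)) * fall (d:ℕ) (((k:ℕ)+1 : ℕ))
          + ((k:ℕ):ℝ) * fall (d:ℕ) (((k:ℕ)-1 : ℕ))
          - (N:ℝ) * fall (d:ℕ) ((k:ℕ):ℝ) := by
      simp only [Matrix.transpose_apply, hQ, Pm, Fin.ext_iff]
      rw [Fin.sum_univ_eq_sum_range (fun j =>
        (if j = (k:ℕ)+1 then ((N:ℝ) - (k:ℕ)) else if (k:ℕ) = j+1 then ((k:ℕ):ℝ)
          else if j = (k:ℕ) then -(N:ℝ) else 0) * fall (d:ℕ) (j:ℝ))]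
      exact sum3 N (k:ℕ) (by omega) (fun m => fall (d:ℕ) (m:ℝ))
    have hR : ∑ e, Pm N k e * Tm N e d
        = fall (d:ℕ) ((k:ℕ):ℝ) * (-2*((d:ℕ):ℝ))
          + fall ((d:ℕ)-1) ((k:ℕ):ℝ) * (((d:ℕ):ℝ)*((N:ℝ) - ((d:ℕ):ℝ) + 1)) := by
      simp only [Pm, Tm]
      rw [Fin.sum_univ_eq_sum_range (fun e =>
        fall e ((k:ℕ):ℝ) * (if e = (d:ℕ) then -2*((d:ℕ):ℝ)
          else if e+1 = (d:ℕ) then ((d:ℕ):ℝ)*((N:ℝ) - ((d:ℕ):ℝ) + 1) else 0))]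
      exact sum2 N (d:ℕ) (by omega) (fun m => fall m ((k:ℕ):ℝ)) _ _
        (fun h => by simp [h])
    rw [hL, hR]
    rcases Nat.eq_zero_or_pos (d:ℕ) with hd | hd
    · simp [hd, fall_zero]
    · obtain ⟨e, he⟩ := Nat.exists_eq_succ_of_ne_zero (by omega : (d:ℕ) ≠ 0)
      rw [he]
      simp only [Nat.succ_eq_add_one, Nat.add_sub_cancel]
      have hmid : (((k:ℕ):ℝ)) * fall (e+1) ((((k:ℕ)-1 : ℕ)):ℝ)
          = (((k:ℕ):ℝ)) * fall (e+1) (((k:ℕ):ℝ)-1) := by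
        rcases Nat.eq_zero_or_pos (k:ℕ) with hk | hk
        · simp [hk]
        · rw [Nat.cast_sub hk]; norm_num
      have hk1 : ((((k:ℕ)+1 : ℕ)):ℝ) = ((k:ℕ):ℝ) + 1 := by push_cast; ring
      rw [hk1, hmid]
      have := key N e ((k:ℕ):ℝ)
      push_cast
      push_cast at this
      linarith [this]
  -- determinant of P
  have hdP : (Pm N).det ≠ 0 := by
    have htri : (Pm N).BlockTriangular OrderDual.toDual := by
      intro i j hij
      have h' : (i:ℕ) < (j:ℕ) := hij
      exact fall_nat_zero_of_lt h'
    rw [Matrix.det_of_lowerTriangular (Pm N) htri]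
    have hpos : (0:ℝ) < ∏ i : Fin (N+1), Pm N i i :=
      Finset.prod_pos fun d _ => fall_self_pos (d:ℕ)
    exact hpos.ne'
  have h1 : (Qᵀ - μ • 1) * Pm N = Pm N * (Tm N - μ • 1) := by
    rw [Matrix.sub_mul, Matrix.mul_sub, hPT, Matrix.smul_mul, Matrix.mul_smul,
      Matrix.one_mul, Matrix.mul_one]
  have h2 : (Qᵀ - μ • 1).det = (Tm N - μ • 1).det := by
    have h := congrArg Matrix.det h1
    rw [Matrix.det_mul, Matrix.det_mul, mul_comm ((Pm N).det)] at h
    exact mul_right_cancel₀ hdP h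
  have h3 : (Tm N - μ • 1).det = ∏ d : Fin (N+1), (-2*((d:ℕ):ℝ) - μ) := by
    have htri : (Tm N - μ • 1).BlockTriangular id := by
      intro i j hij
      have h' : (j:ℕ) < (i:ℕ) := hij
      simp only [Matrix.sub_apply, Matrix.smul_apply, Matrix.one_apply, Tm]
      rw [if_neg (by omega : ¬((i:ℕ) = (j:ℕ))),
        if_neg (by omega : ¬((i:ℕ)+1 = (j:ℕ))),
        if_neg (fun h : i = j => absurd (congrArg Fin.val h) (by omega))]
      simp
    rw [Matrix.det_of_upperTriangular htri]
    refine Finset.prod_congr rfl fun d _ => ?_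
    simp [Tm, Matrix.sub_apply, Matrix.smul_apply, Matrix.one_apply]
  have h4 : (Q - μ • 1).det = ∏ d : Fin (N+1), (-2*((d:ℕ):ℝ) - μ) := by
    rw [← Matrix.det_transpose, Matrix.transpose_sub, Matrix.transpose_smul,
      Matrix.transpose_one, h2, h3]
  constructor
  · rintro ⟨v, hv, hQv⟩
    have hz : (Q - μ • 1).mulVec v = 0 := by
      rw [Matrix.sub_mulVec, Matrix.smul_mulVec, Matrix.one_mulVec, hQv, sub_self]
    have hdet : (Q - μ • 1).det = 0 := Matrix.exists_mulVec_eq_zero_iff.mp ⟨v, hv, hz⟩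
    rw [h4] at hdet
    obtain ⟨d, -, hd0⟩ := Finset.prod_eq_zero_iff.mp hdet
    exact ⟨d, by linarith⟩
  · rintro ⟨k, rfl⟩
    have hdet : (Q - (-2 * ((k:ℕ):ℝ)) • 1).det = 0 := by
      rw [h4]; exact Finset.prod_eq_zero (Finset.mem_univ k) (by ring)
    obtain ⟨v, hv, hz⟩ := Matrix.exists_mulVec_eq_zero_iff.mpr hdet
    refine ⟨v, hv, ?_⟩
    rwa [Matrix.sub_mulVec, Matrix.smul_mulVec, Matrix.one_mulVec,
      sub_eq_zero] at hz
end

section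
/- Define vectors v^k ∈ ℤ^{N+1}, k = 0,...,N, by the generating function Σ_{i=0}^N v_{i,k} t^i = (1−t)^k (1+t)^{N−k}. Then v^k is an eigenvector of the tridiagonal mutation matrix Q_N (with entries (N−j) on the subdiagonal, j on the superdiagonal, −N on the diagonal) corresponding to eigenvalue −2k. -/
open Finset Matrix Polynomial

private lemma ck_aux1 (m : ℕ) :
    (1 - X : ℝ[X]) * derivative ((1 - X) ^ m) = -(C (m : ℝ)) * (1 - X) ^ m := by
  cases m with
  | zero => simp
  | succ n =>
    rw [derivative_pow]
    simp only [derivative_sub, derivative_one, derivative_X, zero_sub, C_eq_natCast]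
    push_cast
    ring

private lemma ck_aux2 (m : ℕ) :
    (1 + X : ℝ[X]) * derivative ((1 + X) ^ m) = C (m : ℝ) * (1 + X) ^ m := by
  cases m with
  | zero => simp
  | succ n =>
    rw [derivative_pow]
    simp only [derivative_add, derivative_one, derivative_X, zero_add, C_eq_natCast]
    push_cast
    ring

private lemma ck_key (N k : ℕ) (hk : k ≤ N) :
    (1 - X ^ 2 : ℝ[X]) * derivative ((1 - X) ^ k * (1 + X) ^ (N - k)) =
      (C (N : ℝ) - 2 * C (k : ℝ) - C (N : ℝ) * X) * ((1 - X) ^ k * (1 + X) ^ (N - k)) := by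
  have h1 := ck_aux1 k
  have h2 := ck_aux2 (N - k)
  have hNk : ((N - k : ℕ) : ℝ) = (N : ℝ) - k := by push_cast [hk]; ring
  rw [hNk, map_sub] at h2
  rw [derivative_mul]
  linear_combination ((1 + X : ℝ[X]) * (1 + X) ^ (N - k)) * h1 +
    ((1 - X : ℝ[X]) * (1 - X) ^ k) * h2

/-- The coefficient vector of (1−t)^k(1+t)^{N−k} is an eigenvector of the
    tridiagonal mutation matrix Q_N for the eigenvalue −2k. -/
theorem crow_kimura_eigenvectors_generating_function
    (N : ℕ) (Q : Matrix (Fin (N + 1)) (Fin (N + 1)) ℝ)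
    (hQ : ∀ i j : Fin (N + 1), Q i j =
      if (i : ℕ) = (j : ℕ) + 1 then (N : ℝ) - (j : ℕ)
      else if (j : ℕ) = (i : ℕ) + 1 then (j : ℝ)
      else if i = j then -(N : ℝ) else 0)
    (k : Fin (N + 1))
    (v : Fin (N + 1) → ℝ)
    (hv : ∀ i : Fin (N + 1), v i =
      (((1 - X) ^ (k : ℕ) * (1 + X) ^ (N - (k : ℕ)) : Polynomial ℝ)).coeff i) :
    Q.mulVec v = (-2 * (k : ℕ) : ℝ) • v := by
  have hk : (k : ℕ) ≤ N := Nat.lt_succ_iff.mp k.isLt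
  set p : ℝ[X] := (1 - X) ^ (k : ℕ) * (1 + X) ^ (N - (k : ℕ)) with hp
  set a : ℕ → ℝ := fun n => p.coeff n with ha
  have key := ck_key N k hk
  have hdeg : ∀ n : ℕ, N < n → a n = 0 := by
    intro n hn
    apply coeff_eq_zero_of_natDegree_lt
    calc p.natDegree
        ≤ ((1 - X : ℝ[X]) ^ (k:ℕ)).natDegree + ((1 + X : ℝ[X]) ^ (N - (k:ℕ))).natDegree :=
          natDegree_mul_le
      _ ≤ (k:ℕ) * (1 - X : ℝ[X]).natDegree + (N - (k:ℕ)) * (1 + X : ℝ[X]).natDegree := by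
          gcongr <;> exact natDegree_pow_le
      _ ≤ (k:ℕ) * 1 + (N - (k:ℕ)) * 1 := by gcongr <;> compute_degree
      _ ≤ N := by omega
      _ < n := hn
  have hrec0 : a 1 = ((N:ℝ) - 2*(k:ℕ)) * a 0 := by
    have h := congrArg (fun q : ℝ[X] => q.coeff 0) key
    simp only [sub_mul, one_mul, coeff_sub, coeff_derivative] at h
    rw [mul_comm (X^2) (derivative p), Polynomial.coeff_mul_X_pow'] at h
    have hz : (C ((N:ℕ):ℝ) * (X * p)).coeff 0 = (0:ℝ) := by
      rw [coeff_C_mul, mul_coeff_zero, coeff_X_zero, zero_mul, mul_zero]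
    rw [mul_assoc (C (N:ℝ)) X p, hz] at h
    rw [show (2 : ℝ[X]) * C (((k:ℕ)):ℝ) = C (2*(((k:ℕ)):ℝ)) by
      rw [_root_.map_mul, map_ofNat], coeff_C_mul, coeff_C_mul] at h
    rw [if_neg (by norm_num : ¬ (2:ℕ) ≤ 0)] at h
    simp only [Nat.cast_zero, zero_add, mul_one, sub_zero, zero_add] at h
    simp only [ha]
    linarith [h]
  have hrec : ∀ m : ℕ, ((m:ℝ)+2) * a (m+2)
      = ((N:ℝ) - 2*(k:ℕ)) * a (m+1) - (N:ℝ) * a m + (m:ℝ) * a m := by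
    intro m
    have h := congrArg (fun q : ℝ[X] => q.coeff (m+1)) key
    simp only [sub_mul, one_mul, coeff_sub, coeff_C_mul, coeff_derivative] at h
    rw [mul_comm (X^2) (derivative p), Polynomial.coeff_mul_X_pow'] at h
    rw [mul_assoc (C (N:ℝ)) X p, coeff_C_mul, coeff_X_mul] at h
    rw [show (2 : ℝ[X]) * C (((k:ℕ)):ℝ) = C (2*(((k:ℕ)):ℝ)) by
      rw [_root_.map_mul, map_ofNat], coeff_C_mul] at h
    simp only [ha]
    cases m with
    | zero => simp at h; push_cast; linarith
    | succ n =>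
      have h2 : (n+1+1-2 : ℕ) = n := by omega
      rw [if_pos (by omega), h2, coeff_derivative] at h
      push_cast at h ⊢
      linarith
  funext i
  have hsplit : Q.mulVec v i =
      (∑ j : Fin (N+1), if (i:ℕ) = (j:ℕ)+1 then ((N:ℝ) - (j:ℕ)) * v j else 0)
      + (∑ j : Fin (N+1), if (j:ℕ) = (i:ℕ)+1 then ((j:ℕ):ℝ) * v j else 0)
      + (∑ j : Fin (N+1), if i = j then -(N:ℝ) * v j else 0) := by
    simp only [Matrix.mulVec, dotProduct, hQ]
    rw [← Finset.sum_add_distrib, ← Finset.sum_add_distrib]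
    apply Finset.sum_congr rfl
    intro j _
    rcases eq_or_ne ((i:ℕ)) ((j:ℕ)+1) with h1 | h1
    · rw [if_pos h1, if_pos h1, if_neg (by omega), if_neg (by omega : ¬ i = j)]
      ring
    · rw [if_neg h1, if_neg h1]
      rcases eq_or_ne ((j:ℕ)) ((i:ℕ)+1) with h2 | h2
      · rw [if_pos h2, if_pos h2, if_neg (by omega : ¬ i = j)]
        ring
      · rw [if_neg h2, if_neg h2]
        rcases eq_or_ne i j with h3 | h3
        · rw [if_pos h3, if_pos h3]; ring
        · rw [if_neg h3, if_neg h3]; ring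
  have hS3 : (∑ j : Fin (N+1), if i = j then -(N:ℝ) * v j else 0) = -(N:ℝ) * a i := by
    rw [Finset.sum_ite_eq]
    simp [hv i, ha]
  have hS2 : (∑ j : Fin (N+1), if (j:ℕ) = (i:ℕ)+1 then ((j:ℕ):ℝ) * v j else 0)
      = (((i:ℕ):ℝ)+1) * a ((i:ℕ)+1) := by
    by_cases hiN : (i:ℕ) < N
    · set j1 : Fin (N+1) := ⟨(i:ℕ)+1, by omega⟩ with hj1
      have hc : ∀ j : Fin (N+1),
          (if (j:ℕ) = (i:ℕ)+1 then ((j:ℕ):ℝ) * v j else 0)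
            = (if j = j1 then ((j:ℕ):ℝ) * v j else 0) := by
        intro j
        by_cases h : j = j1
        · rw [if_pos h, if_pos (by rw [h])]
        · rw [if_neg (fun hc => h (Fin.ext hc)), if_neg h]
      rw [Finset.sum_congr rfl (fun j _ => hc j), Finset.sum_ite_eq']
      simp only [Finset.mem_univ, if_true, hj1, hv, Fin.val_mk, ha]
      push_cast
      ring_nf
    · have hN : (i:ℕ) = N := by omega
      rw [Finset.sum_eq_zero (fun j _ => by rw [if_neg (by omega)])]
      rw [hN, hdeg (N+1) (by omega)]
      ring
  rcases Nat.eq_zero_or_pos (i:ℕ) with hi0 | hip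
  · have hS1 : (∑ j : Fin (N+1), if (i:ℕ) = (j:ℕ)+1 then ((N:ℝ) - (j:ℕ)) * v j else 0) = 0 :=
      Finset.sum_eq_zero (fun j _ => by rw [if_neg (by omega)])
    rw [hsplit, hS1, hS2, hS3]
    have hv0 : v i = a 0 := by rw [hv i, hi0]
    simp only [Pi.smul_apply, smul_eq_mul, hv0, hi0]
    push_cast
    linarith [hrec0]
  · obtain ⟨m, hm⟩ : ∃ m, (i:ℕ) = m + 1 := ⟨(i:ℕ)-1, by omega⟩
    have hS1 : (∑ j : Fin (N+1), if (i:ℕ) = (j:ℕ)+1 then ((N:ℝ) - (j:ℕ)) * v j else 0)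
        = ((N:ℝ) - m) * a m := by
      set j0 : Fin (N+1) := ⟨m, by omega⟩ with hj0
      have hc : ∀ j : Fin (N+1),
          (if (i:ℕ) = (j:ℕ)+1 then ((N:ℝ) - (j:ℕ)) * v j else 0)
            = (if j = j0 then ((N:ℝ) - (j:ℕ)) * v j else 0) := by
        intro j
        by_cases h : j = j0
        · rw [if_pos (by rw [h, hj0]; exact hm), if_pos h]
        · rw [if_neg (fun hc => h (Fin.ext (show (j:ℕ) = m by omega))), if_neg h]
      rw [Finset.sum_congr rfl (fun j _ => hc j), Finset.sum_ite_eq']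
      simp only [Finset.mem_univ, if_true, hj0, hv, Fin.val_mk, ha]
    rw [hsplit, hS1, hS2, hS3]
    have hvi : v i = a (m+1) := by rw [hv i, hm]
    simp only [Pi.smul_apply, smul_eq_mul, hvi]
    rw [show (i:ℕ)+1 = m+2 by omega, hm]
    push_cast
    linarith [hrec m]
end

section
/- Let V be the (N+1)×(N+1) matrix whose k-th column consists of the coefficients of (1−t)^k(1+t)^{N−k}. Then V² = 2^N·I, i.e. V⁻¹ = 2^{−N}V, and det V = (−2)^{N(N+1)/2}. -/
open Finset Matrix Polynomial

/-!
Let `T p = (1 + t)^N p((1 - t)/(1 + t))`, the homogenized Cayley transform on polynomials of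
degree at most `N`; in the monomial basis its matrix is `V`. Homogenizing, `T` is the linear
substitution `(x, y) ↦ (y - x, y + x)` on binary forms of degree `N`, whose square is `(x, y) ↦
(2x, 2y)`, i.e. multiplication by `2^N`. For the determinant, substituting `s = 1 - t` writes
`(1 - t)^k (1 + t)^(N-k) = s^k (2 - s)^(N-k)`, so `V` is the product of the upper triangular
matrix of the powers of `1 - t` (diagonal `(-1)^k`) and a lower triangular matrix with diagonal
`2^(N-k)`.
-/

lemma MvPolynomial.IsHomogeneous.aeval_smul {σ R S : Type*} [CommSemiring R] [CommSemiring S]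
    [Algebra R S] {φ : MvPolynomial σ R} {n : ℕ} (hφ : φ.IsHomogeneous n) (c : S) (g : σ → S) :
    MvPolynomial.aeval (c • g) φ = c ^ n * MvPolynomial.aeval g φ := by
  rw [φ.as_sum, map_sum, map_sum, Finset.mul_sum]
  refine Finset.sum_congr rfl fun d hd => ?_
  simp only [MvPolynomial.aeval_monomial, Pi.smul_apply, smul_eq_mul, mul_pow, Finsupp.prod,
    Finset.prod_mul_distrib, Finset.prod_pow_eq_pow_sum, ← hφ (MvPolynomial.mem_support_iff.mp hd),
    Finsupp.weight_apply, Finsupp.sum, Pi.one_apply, mul_one]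
  ring

namespace Polynomial

variable {R : Type*} [CommRing R]

lemma coeff_one_sub_X_pow_self (m : ℕ) : ((1 - X : R[X]) ^ m).coeff m = (-1) ^ m := by
  have h := coeff_pow_of_natDegree_le (p := (1 - X : R[X])) (m := m) (n := 1) (by compute_degree!)
  rw [mul_one] at h
  simp [h, coeff_one]

section CoeffMatrix

variable {n : ℕ}

def coeffMatrix (p : Fin n → R[X]) : Matrix (Fin n) (Fin n) R :=
  Matrix.of fun i k => (p k).coeff i

@[simp]
lemma coeffMatrix_apply (p : Fin n → R[X]) (i k : Fin n) :
    coeffMatrix p i k = (p k).coeff i :=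
  rfl

lemma coeffMatrix_mul (p q : Fin n → R[X]) :
    coeffMatrix p * coeffMatrix q = coeffMatrix fun j => ∑ k : Fin n, (q j).coeff k • p k := by
  ext i j
  simp [Matrix.mul_apply, finsetSum_coeff, mul_comm]

lemma sum_coeff_smul_pow {q : R[X]} (hq : q.natDegree < n) (r : R[X]) :
    ∑ k : Fin n, q.coeff k • r ^ (k : ℕ) = q.comp r := by
  rw [comp_eq_aeval, aeval_eq_sum_range' hq,
    Fin.sum_univ_eq_sum_range (fun k => q.coeff k • r ^ k)]

lemma coeffMatrix_comp (q : Fin n → R[X]) (hq : ∀ k, (q k).natDegree < n) (r : R[X]) :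
    coeffMatrix (fun k => (q k).comp r) = coeffMatrix (fun k => r ^ (k : ℕ)) * coeffMatrix q := by
  simp only [coeffMatrix_mul, sum_coeff_smul_pow (hq _)]

lemma det_coeffMatrix_of_natDegree_le (p : Fin n → R[X]) (hp : ∀ k, (p k).natDegree ≤ k) :
    (coeffMatrix p).det = ∏ k, (p k).coeff k :=
  det_of_isUpperTriangular fun _ k hki => coeff_eq_zero_of_natDegree_lt ((hp k).trans_lt hki)

lemma det_coeffMatrix_of_X_pow_dvd (p : Fin n → R[X]) (hp : ∀ k : Fin n, X ^ (k : ℕ) ∣ p k) :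
    (coeffMatrix p).det = ∏ k, (p k).coeff k :=
  det_of_isLowerTriangular _ fun i k hik => X_pow_dvd_iff.mp (hp k) i hik

end CoeffMatrix

section CayleyTransform

variable (R) in
/-- `p ↦ (1 + X)^N p((1 - X)/(1 + X))`, computed through the degree-`N` homogenization of `p`. -/
noncomputable def cayleyTransform (N : ℕ) : R[X] →ₗ[R] R[X] :=
  (MvPolynomial.aeval ![1 - X, 1 + X]).toLinearMap ∘ₗ homogenizeLM N

lemma cayleyTransform_apply (N : ℕ) (p : R[X]) :
    cayleyTransform R N p = MvPolynomial.aeval ![1 - X, 1 + X] (p.homogenize N) :=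
  rfl

lemma cayleyTransform_X_pow {N k : ℕ} (hk : k ≤ N) :
    cayleyTransform R N (X ^ k) = (1 - X) ^ k * (1 + X) ^ (N - k) := by
  simp [cayleyTransform_apply, homogenize_X_pow hk]

lemma natDegree_cayleyTransform_le (N : ℕ) (p : R[X]) :
    (cayleyTransform R N p).natDegree ≤ N := by
  rw [cayleyTransform_apply, homogenize, map_sum]
  refine natDegree_sum_le_of_forall_le _ _ fun kl hkl => ?_
  rw [HasAntidiagonal.mem_antidiagonal] at hkl
  simp only [MvPolynomial.aeval_monomial, algebraMap_eq, Finsupp.prod_pow, Finsupp.coe_update,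
    Fin.prod_univ_two, cons_val_zero, cons_val_one, cons_val_fin_one, ne_eq, zero_ne_one,
    not_false_eq_true, Function.update_of_ne, Function.update_self, Finsupp.single_eq_same]
  rw [← hkl]
  compute_degree

lemma homogenize_cayleyTransform (N : ℕ) (p : R[X]) :
    (cayleyTransform R N p).homogenize N =
      MvPolynomial.bind₁ ![.X 1 - .X 0, .X 1 + .X 0] (p.homogenize N) := by
  apply homogenize_eq_of_isHomogeneous
  · rw [← MvPolynomial.aeval_eq_bind₁]
    simpa only [one_mul] using (isHomogeneous_homogenize p).aeval _ (n := 1) fun i => by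
      fin_cases i
      · exact (MvPolynomial.isHomogeneous_X _ _).sub (MvPolynomial.isHomogeneous_X _ _)
      · exact (MvPolynomial.isHomogeneous_X _ _).add (MvPolynomial.isHomogeneous_X _ _)
  · rw [cayleyTransform_apply, MvPolynomial.aeval_bind₁]
    congr 1
    ext i
    fin_cases i <;> simp

lemma cayleyTransform_cayleyTransform {N : ℕ} {p : R[X]} (hp : p.natDegree ≤ N) :
    cayleyTransform R N (cayleyTransform R N p) = 2 ^ N * p := by
  rw [cayleyTransform_apply, homogenize_cayleyTransform, MvPolynomial.aeval_bind₁]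
  calc _ = MvPolynomial.aeval ((2 : R[X]) • ![X, 1]) (p.homogenize N) := by
        congr 1; ext i : 1; fin_cases i <;> simp <;> ring
    _ = 2 ^ N * p := by
      rw [(isHomogeneous_homogenize p).aeval_smul, aeval_homogenize_X_one p hp]

end CayleyTransform

section Krawtchouk

variable (R) in
noncomputable def krawtchoukMatrix (N : ℕ) : Matrix (Fin (N + 1)) (Fin (N + 1)) R :=
  coeffMatrix fun k => (1 - X) ^ (k : ℕ) * (1 + X) ^ (N - k)

lemma krawtchoukMatrix_eq_coeffMatrix_cayleyTransform (N : ℕ) :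
    krawtchoukMatrix R N = coeffMatrix fun k => cayleyTransform R N (X ^ (k : ℕ)) := by
  simp only [krawtchoukMatrix, cayleyTransform_X_pow (Fin.is_le _)]

variable (R) in
lemma krawtchoukMatrix_mul_self (N : ℕ) :
    krawtchoukMatrix R N * krawtchoukMatrix R N = (2 ^ N : R) • 1 := by
  have hcol (j : Fin (N + 1)) : ∑ k : Fin (N + 1),
      (cayleyTransform R N (X ^ (j : ℕ))).coeff k • cayleyTransform R N (X ^ (k : ℕ)) =
        2 ^ N * X ^ (j : ℕ) := by
    set q := cayleyTransform R N (X ^ (j : ℕ))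
    calc _ = cayleyTransform R N (∑ k : Fin (N + 1), q.coeff k • X ^ (k : ℕ)) := by
          simp only [map_sum, map_smul]
      _ = cayleyTransform R N q := by
          rw [sum_coeff_smul_pow (Nat.lt_succ_of_le (natDegree_cayleyTransform_le N _)), comp_X]
      _ = 2 ^ N * X ^ (j : ℕ) :=
          cayleyTransform_cayleyTransform ((natDegree_X_pow_le _).trans j.is_le)
  rw [krawtchoukMatrix_eq_coeffMatrix_cayleyTransform, coeffMatrix_mul]
  ext i j
  rw [coeffMatrix_apply, hcol, ← C_ofNat, ← C_pow, coeff_C_mul_X_pow]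
  simp [Matrix.one_apply, Fin.val_inj]

lemma krawtchoukMatrix_eq_mul (N : ℕ) :
    krawtchoukMatrix R N = coeffMatrix (fun k : Fin (N + 1) => (1 - X) ^ (k : ℕ)) *
      coeffMatrix (fun k : Fin (N + 1) => X ^ (k : ℕ) * (2 - X) ^ (N - k)) := by
  rw [← coeffMatrix_comp _ fun k => Nat.lt_succ_of_le (by compute_degree; omega)]
  simp only [krawtchoukMatrix, mul_comp, pow_comp, X_comp, sub_comp, ofNat_comp]
  ring_nf

variable (R) in
lemma det_krawtchoukMatrix (N : ℕ) : (krawtchoukMatrix R N).det = (-2) ^ (N * (N + 1) / 2) := by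
  rw [krawtchoukMatrix_eq_mul, det_mul,
    det_coeffMatrix_of_natDegree_le _ fun _ => by compute_degree!,
    det_coeffMatrix_of_X_pow_dvd _ fun _ => dvd_mul_right _ _, ← prod_mul_distrib]
  simp only [coeff_one_sub_X_pow_self, coeff_X_pow_mul', le_refl, if_true, Nat.sub_self,
    coeff_zero_eq_eval_zero, eval_pow, eval_sub, eval_ofNat, eval_X, sub_zero]
  have hsum := sum_range_reflect (fun k => k) (N + 1)
  simp only [Nat.add_sub_cancel] at hsum
  rw [Fin.prod_univ_eq_prod_range (fun k => (-1 : R) ^ k * 2 ^ (N - k)), prod_mul_distrib,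
    prod_pow_eq_pow_sum, prod_pow_eq_pow_sum, hsum, ← mul_pow, sum_range_id, Nat.add_sub_cancel,
    Nat.mul_comm (N + 1)]
  norm_num

end Krawtchouk

end Polynomial

/-- The eigenvector matrix V (columns = coefficients of (1−t)^k(1+t)^{N−k})
    satisfies V² = 2^N·I, hence V⁻¹ = 2^{−N}V, and det V = (−2)^{N(N+1)/2}. -/
theorem eigenvector_matrix_involution
    (N : ℕ) (V : Matrix (Fin (N + 1)) (Fin (N + 1)) ℝ)
    (hV : ∀ i k : Fin (N + 1), V i k =
      (((1 - X) ^ (k : ℕ) * (1 + X) ^ (N - (k : ℕ)) : Polynomial ℝ)).coeff i) :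
    V * V = (2 ^ N : ℝ) • (1 : Matrix (Fin (N + 1)) (Fin (N + 1)) ℝ) ∧
    V⁻¹ = ((2 : ℝ) ^ N)⁻¹ • V ∧
    V.det = (-2 : ℝ) ^ (N * (N + 1) / 2) := by
  obtain rfl : V = krawtchoukMatrix ℝ N := Matrix.ext hV
  have hsq := krawtchoukMatrix_mul_self ℝ N
  refine ⟨hsq, inv_eq_right_inv ?_, det_krawtchoukMatrix ℝ N⟩
  rw [Matrix.mul_smul, hsq, smul_smul, inv_mul_cancel₀ (by positivity), one_smul]
end
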